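/- arXiv:math/0511717 — 2 statements merged into one kernel-verified Lean document; each statement's English description precedes it below -/
import Mathlib

section
/- For any two faces x, y ∈ ℱ of a central hyperplane arrangement 𝒜, the sign vector τ defined by τᵢ = σᵢ(x) if σᵢ(x) ≠ 0 and τᵢ = σᵢ(y) if σᵢ(x) = 0 is again the sign vector of a face, i.e. ⋂ᵢ Hᵢ^{τᵢ} ≠ ∅. Consequently ℱ is closed under the product (x,y) ↦ xy given by this sign vector, and ℱ is a monoid with identity 1 = ⋂ᵢ Hᵢ. -/
/-!
STATEMENT 0: For any two faces x, y ∈ ℱ of a central hyperplane arrangement 𝒜, the sign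
vector τ defined by τᵢ = σᵢ(x) if σᵢ(x) ≠ 0 and τᵢ = σᵢ(y) if σᵢ(x) = 0 is again the sign
vector of a face, i.e. ⋂ᵢ Hᵢ^{τᵢ} ≠ ∅.  Consequently ℱ is closed under the product
(x,y) ↦ xy given by this sign vector, and ℱ is a monoid with identity 1 = ⋂ᵢ Hᵢ.
-/

open scoped Classical

noncomputable section

namespace FaceSemigroup

variable {d n : ℕ}

/-- The cell (possibly empty) of `ℝ^d` determined by a sign vector: the intersection
`⋂ᵢ Hᵢ^{σᵢ}` where `Hᵢ⁰ = ker fᵢ`, `Hᵢ^± = {v | ± fᵢ(v) > 0}`. -/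
def cell (f : Fin n → ((Fin d → ℝ) →ₗ[ℝ] ℝ)) (σ : Fin n → SignType) : Set (Fin d → ℝ) :=
  {v | ∀ i, SignType.sign (f i v) = σ i}

/-- A sign vector is (the sign vector of) a face iff its cell is nonempty. -/
def IsFaceVec (f : Fin n → ((Fin d → ℝ) →ₗ[ℝ] ℝ)) (σ : Fin n → SignType) : Prop :=
  (cell f σ).Nonempty

/-- The product of sign vectors: `τᵢ = σᵢ(x)` if `σᵢ(x) ≠ 0`, otherwise `τᵢ = σᵢ(y)`. -/
def mulVec (σ τ : Fin n → SignType) : Fin n → SignType :=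
  fun i => if σ i = 0 then τ i else σ i

/-!
If `x` lies in the face with sign vector `σ` and `y` in the face with sign vector `τ`, then
`x + ε • y` lies in the face with sign vector `σ τ` for every small enough `ε > 0`: where
`fᵢ x ≠ 0` a small perturbation keeps its sign, and where `fᵢ x = 0` the sign is that of
`ε fᵢ y`.
-/

open Filter Topology

theorem eventually_sign_add_mul {𝕜 : Type*} [Field 𝕜] [LinearOrder 𝕜] [IsStrictOrderedRing 𝕜]
    [TopologicalSpace 𝕜] [OrderTopology 𝕜] (a b : 𝕜) :
    ∀ᶠ ε in 𝓝[>] 0, SignType.sign (a + ε * b) =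
      if SignType.sign a = 0 then SignType.sign b else SignType.sign a := by
  split_ifs with ha
  · rw [sign_eq_zero_iff.mp ha]
    filter_upwards [self_mem_nhdsWithin] with ε (hε : 0 < ε)
    rw [zero_add, sign_mul, sign_pos hε, one_mul]
  · have hlim : Tendsto (fun ε => a + ε * b) (𝓝[>] 0) (𝓝 a) := by
      have hcont : Continuous fun ε : 𝕜 => a + ε * b := by fun_prop
      exact (hcont.tendsto' 0 a (by simp)).mono_left nhdsWithin_le_nhds
    exact ((continuousAt_sign_of_ne_zero (sign_ne_zero.mp ha)).tendsto.comp hlim).eventually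
      (p := (· = SignType.sign a)) (mem_nhds_discrete.mpr rfl)

theorem isFaceVec_mulVec {f : Fin n → ((Fin d → ℝ) →ₗ[ℝ] ℝ)} {σ τ : Fin n → SignType}
    (hσ : IsFaceVec f σ) (hτ : IsFaceVec f τ) : IsFaceVec f (mulVec σ τ) := by
  obtain ⟨x, hx⟩ := hσ
  obtain ⟨y, hy⟩ := hτ
  have hsign : ∀ᶠ ε in 𝓝[>] (0 : ℝ), ∀ i, SignType.sign (f i (x + ε • y)) = mulVec σ τ i := by
    refine eventually_all.mpr fun i => ?_
    filter_upwards [eventually_sign_add_mul (f i x) (f i y)] with ε hε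
    rw [map_add, map_smul, smul_eq_mul, hε, hx i, hy i]
    rfl
  obtain ⟨ε, hε⟩ := hsign.exists
  exact ⟨x + ε • y, hε⟩

theorem isFaceVec_zero (f : Fin n → ((Fin d → ℝ) →ₗ[ℝ] ℝ)) : IsFaceVec f (fun _ => 0) :=
  ⟨0, fun i => by simp⟩

theorem mulVec_assoc (σ τ ρ : Fin n → SignType) :
    mulVec (mulVec σ τ) ρ = mulVec σ (mulVec τ ρ) := by
  funext i
  simp only [mulVec]
  split_ifs <;> simp_all

theorem zero_mulVec (σ : Fin n → SignType) : mulVec (fun _ => 0) σ = σ := by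
  funext i
  simp [mulVec]

theorem mulVec_zero (σ : Fin n → SignType) : mulVec σ (fun _ => 0) = σ := by
  funext i
  simp only [mulVec]
  split_ifs with h <;> simp [h]

theorem statement0_general (f : Fin n → ((Fin d → ℝ) →ₗ[ℝ] ℝ)) :
    -- the product of the sign vectors of two faces is the sign vector of a face
    (∀ σ τ : Fin n → SignType, IsFaceVec f σ → IsFaceVec f τ → IsFaceVec f (mulVec σ τ))
    -- the all-zeros sign vector (that of `1 = ⋂ᵢ Hᵢ`) is the sign vector of a face
    ∧ IsFaceVec f (fun _ => 0)
    -- the product is associative …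
    ∧ (∀ σ τ ρ : Fin n → SignType, mulVec (mulVec σ τ) ρ = mulVec σ (mulVec τ ρ))
    -- … and has the sign vector of `⋂ᵢ Hᵢ` as a two-sided identity,
    -- so that ℱ is a monoid
    ∧ (∀ σ : Fin n → SignType, mulVec (fun _ => 0) σ = σ ∧ mulVec σ (fun _ => 0) = σ) :=
  ⟨fun _ _ => isFaceVec_mulVec, isFaceVec_zero f, mulVec_assoc,
    fun σ => ⟨zero_mulVec σ, mulVec_zero σ⟩⟩

theorem statement0 (f : Fin n → ((Fin d → ℝ) →ₗ[ℝ] ℝ)) (hf : ∀ i, f i ≠ 0) :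
    -- the product of the sign vectors of two faces is the sign vector of a face
    (∀ σ τ : Fin n → SignType, IsFaceVec f σ → IsFaceVec f τ → IsFaceVec f (mulVec σ τ))
    -- the all-zeros sign vector (that of `1 = ⋂ᵢ Hᵢ`) is the sign vector of a face
    ∧ IsFaceVec f (fun _ => 0)
    -- the product is associative …
    ∧ (∀ σ τ ρ : Fin n → SignType, mulVec (mulVec σ τ) ρ = mulVec σ (mulVec τ ρ))
    -- … and has the sign vector of `⋂ᵢ Hᵢ` as a two-sided identity,
    -- so that ℱ is a monoid
    ∧ (∀ σ : Fin n → SignType, mulVec (fun _ => 0) σ = σ ∧ mulVec σ (fun _ => 0) = σ) :=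
  statement0_general f

end FaceSemigroup
end
end

section
/- Let L be a finite upper semimodular lattice and let x ≤ y in L. Then any two unrefinable chains from x to y can be connected by a finite sequence of unrefinable chains from x to y in which consecutive chains differ in exactly one element. -/
/-!
STATEMENT 14: Let L be a finite upper semimodular lattice and let x ≤ y in L.  Then any
two unrefinable chains from x to y can be connected by a finite sequence of unrefinable
chains from x to y in which consecutive chains differ in exactly one element.
-/

namespace SemimodularChains

variable {L : Type} [Lattice L]

/-- An unrefinable chain from `x` to `y` of length `m`, presented as a function
`Fin (m+1) → L`: it starts at `x`, ends at `y`, and each entry is covered by the next. -/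
def IsUnrefinableChain (x y : L) {m : ℕ} (c : Fin (m + 1) → L) : Prop :=
  c 0 = x ∧ c (Fin.last m) = y ∧ ∀ i : Fin m, c i.castSucc ⋖ c i.succ

/-- Two chains of the same length differ in exactly one (interior) element. -/
def DifferInOne {m : ℕ} (c d : Fin (m + 1) → L) : Prop :=
  ∃ j : Fin (m + 1), 0 < j.1 ∧ j.1 < m ∧ c j ≠ d j ∧ ∀ i : Fin (m + 1), i ≠ j → c i = d i

/-- One step in the connecting sequence: both chains are unrefinable chains from `x`
to `y` and they differ in exactly one element. -/
def Step (x y : L) {m : ℕ} (c d : Fin (m + 1) → L) : Prop :=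
  IsUnrefinableChain x y c ∧ IsUnrefinableChain x y d ∧ DifferInOne c d

lemma chain_strictMono {x y : L} {m : ℕ} {c : Fin (m + 1) → L}
    (hc : IsUnrefinableChain x y c) : StrictMono c :=
  Fin.strictMono_iff_lt_succ.mpr fun i => (hc.2.2 i).lt

lemma cons_chain {x x' y : L} {m : ℕ} {c : Fin (m + 1) → L}
    (hc : IsUnrefinableChain x' y c) (hx : x ⋖ x') :
    IsUnrefinableChain x y (Fin.cons x c : Fin (m + 2) → L) := by
  refine ⟨Fin.cons_zero _ _, ?_, ?_⟩
  · rw [← Fin.succ_last, Fin.cons_succ]; exact hc.2.1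
  · intro i
    induction i using Fin.cases with
    | zero =>
        rw [Fin.castSucc_zero, Fin.cons_zero, Fin.cons_succ, hc.1]
        exact hx
    | succ j =>
        rw [← Fin.succ_castSucc, Fin.cons_succ, Fin.cons_succ]
        exact hc.2.2 j

lemma tail_chain {x y : L} {m : ℕ} {c : Fin (m + 2) → L}
    (hc : IsUnrefinableChain x y c) :
    IsUnrefinableChain (c (Fin.succ 0)) y (Fin.tail c) := by
  refine ⟨rfl, ?_, ?_⟩
  · show c (Fin.succ (Fin.last m)) = y
    rw [Fin.succ_last]; exact hc.2.1
  · intro i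
    show c (Fin.succ i.castSucc) ⋖ c (Fin.succ i.succ)
    rw [Fin.succ_castSucc]
    exact hc.2.2 i.succ

lemma cons_step {x x' y : L} {m : ℕ} {c d : Fin (m + 1) → L}
    (h : Step x' y c d) (hx : x ⋖ x') :
    Step x y (Fin.cons x c : Fin (m + 2) → L) (Fin.cons x d) := by
  obtain ⟨hc, hd, j, hj0, hjm, hne, hoth⟩ := h
  refine ⟨cons_chain hc hx, cons_chain hd hx, j.succ, Nat.succ_pos _, by
      simpa using Nat.succ_lt_succ hjm, by simpa using hne, ?_⟩
  intro i hi
  induction i using Fin.cases with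
  | zero => simp
  | succ i' =>
      rw [Fin.cons_succ, Fin.cons_succ]
      exact hoth i' (fun h => hi (by rw [h]))

/-- Existence of an unrefinable chain between comparable elements in a finite lattice. -/
lemma exists_chain [Fintype L] (y : L) :
    ∀ z : L, z ≤ y → ∃ k : ℕ, ∃ e : Fin (k + 1) → L, IsUnrefinableChain z y e := by
  intro z
  induction z using IsWellFounded.induction (α := L) (· > ·) with
  | _ z ih =>
    intro hzy
    rcases eq_or_lt_of_le hzy with h | h
    · exact ⟨0, fun _ => z, rfl, h.symm ▸ rfl, fun i => i.elim0⟩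
    · have : IsStronglyAtomic L := IsStronglyAtomic.of_wellFounded_lt wellFounded_lt
      obtain ⟨z', hzz', hz'y⟩ := exists_covBy_le_of_lt h
      obtain ⟨k, e, he⟩ := ih z' hzz'.lt hz'y
      exact ⟨k + 1, Fin.cons z e, cons_chain he hzz'⟩

lemma inf_of_ne {x a b : L} (ha : x ⋖ a) (hb : x ⋖ b) (hab : a ≠ b) : a ⊓ b = x := by
  rcases ha.eq_or_eq (c := a ⊓ b) (le_inf ha.le hb.le) inf_le_left with h | h
  · exact h
  · exfalso
    have hab' : a ≤ b := h ▸ inf_le_right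
    rcases hb.eq_or_eq (c := a) ha.le hab' with h2 | h2
    · exact ha.lt.ne' h2
    · exact hab h2

/-- Main induction. -/
lemma main [Fintype L]
    (hsm : ∀ a b : L, a ⊓ b ⋖ a → a ⊓ b ⋖ b → (a ⋖ a ⊔ b ∧ b ⋖ a ⊔ b)) :
    ∀ m : ℕ, ∀ {m' : ℕ} (x y : L) (c : Fin (m + 1) → L) (d : Fin (m' + 1) → L),
      IsUnrefinableChain x y c → IsUnrefinableChain x y d →
      ∃ h : m = m',
        Relation.ReflTransGen (Step x y) c (d ∘ Fin.cast (congrArg Nat.succ h)) := by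
  intro m
  induction m with
  | zero =>
      intro m' x y c d hc hd
      have hxy : x = y := hc.1 ▸ hc.2.1 ▸ rfl
      have hm' : m' = 0 := by
        by_contra h
        obtain ⟨n, rfl⟩ := Nat.exists_eq_succ_of_ne_zero h
        have hlt := chain_strictMono hd (a := 0) (b := Fin.last (n+1)) (by
          simp [Fin.lt_def, Fin.last])
        rw [hd.1, hd.2.1, hxy] at hlt
        exact lt_irrefl _ hlt
      subst hm'
      refine ⟨rfl, ?_⟩
      have hcd : c = d ∘ Fin.cast (congrArg Nat.succ (rfl : 0 = 0)) := by
        funext i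
        have h0 : i = 0 := Fin.ext (by omega)
        subst h0
        show c 0 = d 0
        rw [hc.1, hd.1]
      rw [hcd]
  | succ n ih =>
      intro m' x y c d hc hd
      have hxc1 : x ⋖ c (Fin.succ 0) := by
        have h := hc.2.2 0
        rwa [Fin.castSucc_zero, hc.1] at h
      have hm'pos : m' ≠ 0 := by
        rintro rfl
        have hy : y = x := hd.1 ▸ hd.2.1 ▸ rfl
        have hlt := chain_strictMono hc (a := 0) (b := Fin.last (n+1)) (by
          simp [Fin.lt_def, Fin.last])
        rw [hc.1, hc.2.1, hy] at hlt
        exact lt_irrefl _ hlt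
      obtain ⟨m'', rfl⟩ := Nat.exists_eq_succ_of_ne_zero hm'pos
      have hxd1 : x ⋖ d (Fin.succ 0) := by
        have h := hd.2.2 0
        rwa [Fin.castSucc_zero, hd.1] at h
      have hctail := tail_chain hc
      have hdtail := tail_chain hd
      have hcc : Fin.cons x (Fin.tail c) = c := by
        rw [← hc.1]; exact Fin.cons_self_tail c
      have hdd : Fin.cons x (Fin.tail d) = d := by
        rw [← hd.1]; exact Fin.cons_self_tail d
      by_cases h1 : c (Fin.succ 0) = d (Fin.succ 0)
      · -- same second element: just recurse on tails
        rw [← h1] at hdtail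
        obtain ⟨hnm, path⟩ := ih (c (Fin.succ 0)) y (Fin.tail c) (Fin.tail d) hctail hdtail
        subst hnm
        refine ⟨rfl, ?_⟩
        have path' := Relation.ReflTransGen.lift (Fin.cons x)
          (fun a b hab => cons_step hab hxc1) _ _ path
        rw [Function.onFun, hcc] at path'
        have e0 : (Fin.tail d) ∘ Fin.cast (congrArg Nat.succ (rfl : n = n)) = Fin.tail d := rfl
        rw [e0, hdd] at path'
        have e1 : d ∘ Fin.cast (congrArg Nat.succ (rfl : n + 1 = n + 1)) = d := rfl
        rw [e1]
        exact path'
      · -- different second elements: use semimodularity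
        have hinf : c (Fin.succ 0) ⊓ d (Fin.succ 0) = x := inf_of_ne hxc1 hxd1 h1
        obtain ⟨hcz, hdz⟩ := hsm (c (Fin.succ 0)) (d (Fin.succ 0))
          (hinf ▸ hxc1) (hinf ▸ hxd1)
        have hc1y : c (Fin.succ 0) ≤ y := by
          have h := (chain_strictMono hc).monotone (a := Fin.succ 0) (b := Fin.last (n+1))
            (Fin.le_last _)
          rwa [hc.2.1] at h
        have hd1y : d (Fin.succ 0) ≤ y := by
          have h := (chain_strictMono hd).monotone (a := Fin.succ 0) (b := Fin.last (m''+1))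
            (Fin.le_last _)
          rwa [hd.2.1] at h
        have hzy : c (Fin.succ 0) ⊔ d (Fin.succ 0) ≤ y := sup_le hc1y hd1y
        obtain ⟨k, e, he⟩ := exists_chain y _ hzy
        have hf : IsUnrefinableChain (c (Fin.succ 0)) y
            (Fin.cons (c (Fin.succ 0)) e : Fin (k+2) → L) := cons_chain he hcz
        have hf' : IsUnrefinableChain (d (Fin.succ 0)) y
            (Fin.cons (d (Fin.succ 0)) e : Fin (k+2) → L) := cons_chain he hdz
        obtain ⟨hnk, path1⟩ := ih (c (Fin.succ 0)) y (Fin.tail c)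
          (Fin.cons (c (Fin.succ 0)) e) hctail hf
        subst hnk
        obtain ⟨hkm, path2⟩ := ih (d (Fin.succ 0)) y (Fin.cons (d (Fin.succ 0)) e)
          (Fin.tail d) hf' hdtail
        subst hkm
        refine ⟨rfl, ?_⟩
        have P1 := Relation.ReflTransGen.lift (Fin.cons x)
          (fun a b hab => cons_step hab hxc1) _ _ path1
        rw [Function.onFun, hcc] at P1
        have e1 : (Fin.cons (c (Fin.succ 0)) e : Fin (k+2) → L) ∘
            Fin.cast (congrArg Nat.succ (rfl : k + 1 = k + 1)) = Fin.cons (c (Fin.succ 0)) e := rfl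
        rw [e1] at P1
        have swap : Step x y (Fin.cons x (Fin.cons (c (Fin.succ 0)) e) : Fin (k+3) → L)
            (Fin.cons x (Fin.cons (d (Fin.succ 0)) e)) := by
          refine ⟨cons_chain hf hxc1, cons_chain hf' hxd1,
            Fin.succ 0, Nat.succ_pos _, ?_, ?_, ?_⟩
          · have hv : (Fin.succ (0 : Fin (k+2))).1 = 1 := by simp
            omega
          · simp only [Fin.cons_succ, Fin.cons_zero]
            exact h1
          · intro i hi
            induction i using Fin.cases with
            | zero => simp
            | succ i' =>
                rw [Fin.cons_succ, Fin.cons_succ]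
                have hi' : i' ≠ 0 := by
                  rintro rfl; exact hi rfl
                induction i' using Fin.cases with
                | zero => exact absurd rfl hi'
                | succ i'' => rw [Fin.cons_succ, Fin.cons_succ]
        have P2 := Relation.ReflTransGen.lift (Fin.cons x)
          (fun a b hab => cons_step hab hxd1) _ _ path2
        have e2 : (Fin.tail d) ∘
            Fin.cast (congrArg Nat.succ (rfl : k + 1 = k + 1)) = Fin.tail d := rfl
        rw [Function.onFun, e2, hdd] at P2
        have e3 : d ∘ Fin.cast (congrArg Nat.succ (rfl : k + 1 + 1 = k + 1 + 1)) = d := rfl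
        rw [e3]
        exact (P1.trans (Relation.ReflTransGen.single swap)).trans P2

theorem statement14 [Fintype L]
    -- L is (upper) semimodular
    (hsm : ∀ a b : L, a ⊓ b ⋖ a → a ⊓ b ⋖ b → (a ⋖ a ⊔ b ∧ b ⋖ a ⊔ b))
    (x y : L) (hxy : x ≤ y) {m m' : ℕ}
    (c : Fin (m + 1) → L) (d : Fin (m' + 1) → L)
    (hc : IsUnrefinableChain x y c) (hd : IsUnrefinableChain x y d) :
    -- the two chains have the same length, and are connected by a finite sequence of
    -- unrefinable chains from x to y, consecutive ones differing in exactly one element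
    ∃ h : m = m',
      Relation.ReflTransGen (Step x y) c (d ∘ Fin.cast (congrArg Nat.succ h)) :=
  main hsm m x y c d hc hd

end SemimodularChains
end
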